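/- Let t ≥ 3 be an integer and let G be a connected graph on [n] with wsat(G, K_{1,t}) = C(t,2). If G has at least μ vertices of degree at least t−1, where μ > C(t+1,2), then G contains a saturating structure (with parameter t) of length μ whose core has size at most C(t+1,2). -/

import Mathlib

/-!
Take a weakly saturated `F₀` with `C(t,2)` edges together with its edge order `e₁, …, e_m`.
Each `eᵢ` lies in a copy of `K_{1,t}`, so one of its endpoints already has degree at least
`t - 1` before `eᵢ` is added. Call a vertex enriched at the first stage at which its degree
reaches `t - 1`. At that moment each of its neighbours is an `F₀`-neighbour or was enriched
strictly earlier, and summing over the enriched vertices shows that the degrees in `F₀` add up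
to at least `|supp F₀| + C(t-1,2)`. As they add up to `2 C(t,2) = C(t+1,2) + C(t-1,2) - 1`,
`F₀` has fewer than `C(t+1,2)` non-isolated vertices. Vertices isolated in `F₀` are enriched
one per stage and with exactly `t - 1` neighbours, all enriched earlier. Listing the support
of `F₀` first and then these vertices in order of enrichment gives the saturating structure,
with the first `max (|supp F₀|) t` vertices as core.
-/

open MeasureTheory Filter

namespace WsatRandom

/-- `G'` contains a subgraph isomorphic to `H` that contains the edge `e`. -/
def ContainsCopyWithEdge {V W : Type*} (G' : SimpleGraph V) (H : SimpleGraph W)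
    (e : Sym2 V) : Prop :=
  ∃ f : W → V, Function.Injective f ∧ (∀ a b, H.Adj a b → G'.Adj (f a) (f b)) ∧
    ∃ a b, H.Adj a b ∧ e = s(f a, f b)

/-- `F` is a weakly `(G,H)`-saturated spanning subgraph of `G`: there is an ordering
`e_1, …, e_m` of the edges of `G` not in `F` such that adding them one by one, each newly
added edge lies in a copy of `H`. -/
def WeaklySaturated {V W : Type*} (G F : SimpleGraph V) (H : SimpleGraph W) : Prop :=
  F ≤ G ∧ ∃ es : List (Sym2 V), es.Nodup ∧
    (∀ e, e ∈ es ↔ e ∈ G.edgeSet \ F.edgeSet) ∧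
    ∀ i : Fin es.length,
      ContainsCopyWithEdge
        (F ⊔ SimpleGraph.fromEdgeSet {e | e ∈ es.take ((i : ℕ) + 1)}) H (es.get i)

/-- The weak saturation number: the minimum number of edges of a weakly `(G,H)`-saturated
spanning subgraph of `G`. -/
noncomputable def wsat {V W : Type*} (G : SimpleGraph V) (H : SimpleGraph W) : ℕ :=
  sInf {m | ∃ F, WeaklySaturated G F H ∧ F.edgeSet.ncard = m}

/-- Minimum degree of a graph. -/
noncomputable def minDeg {W : Type*} (H : SimpleGraph W) : ℕ :=
  sInf {d | ∃ v, d = {u | H.Adj v u}.ncard}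

/-- The Bernoulli(p) measure on `Bool`. -/
noncomputable def bernoulliMeasure (p : ℝ) : Measure Bool :=
  ENNReal.ofReal p • Measure.dirac true + ENNReal.ofReal (1 - p) • Measure.dirac false

/-- The product Bernoulli(p) measure on edge-indicator functions; its pushforward under
`graphOf` is the Erdős–Rényi random graph `G(n,p)`. -/
noncomputable def edgeMeasure (n : ℕ) (p : ℝ) : Measure (Sym2 (Fin n) → Bool) :=
  Measure.pi fun _ => bernoulliMeasure p

/-- The graph on `[n]` determined by an edge-indicator function. -/
def graphOf {n : ℕ} (ω : Sym2 (Fin n) → Bool) : SimpleGraph (Fin n) :=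
  SimpleGraph.fromEdgeSet {e | ω e = true}

/-- The star `K_{1,t}`. -/
def star (t : ℕ) : SimpleGraph (Fin 1 ⊕ Fin t) :=
  completeBipartiteGraph (Fin 1) (Fin t)

/-- `F` together with the vertex ordering `v : Fin x → V` is a saturating structure
(with parameter `t`) of length `x` and core size `y` in `G`: `t ≤ y < x`, `F` is a subgraph
of `G` with all edges among the listed vertices, and every vertex `v i` with `y ≤ i` has
exactly `t-1` neighbors in `F` among the previous vertices. -/
def IsSaturatingStructure {V : Type*} (G : SimpleGraph V) (t x y : ℕ)
    (F : SimpleGraph V) (v : Fin x → V) : Prop :=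
  t ≤ y ∧ y < x ∧ F ≤ G ∧ Function.Injective v ∧
    (∀ a b : V, F.Adj a b → a ∈ Set.range v ∧ b ∈ Set.range v) ∧
    ∀ i : Fin x, y ≤ (i : ℕ) →
      {j : Fin x | (j : ℕ) < (i : ℕ) ∧ F.Adj (v i) (v j)}.ncard = t - 1

open SimpleGraph
open scoped Finset

section Counting

variable {α : Type*}

theorem sum_range_sub_eq_choose (m : ℕ) :
    ∑ k ∈ Finset.range m, (m - k) = (m + 1).choose 2 := by
  induction m with
  | zero => rfl
  | succ m ih =>
    rw [Finset.sum_range_succ', Nat.choose_succ_succ' (m + 1), Nat.choose_one_right, ← ih]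
    simp only [Nat.add_sub_add_right, Nat.sub_zero]
    omega

theorem sum_range_sub_le_sum_sub_card_filter_lt [DecidableEq α] (τ : α → ℕ) (m : ℕ)
    (T : Finset α) :
    ∑ k ∈ Finset.range #T, (m - k) ≤ ∑ v ∈ T, (m - #{u ∈ T | τ u < τ v}) := by
  induction T using Finset.induction_on_max_value τ with
  | empty => simp
  | insert a T haT hmax ih =>
    have hfilter : ∀ v ∈ T, {u ∈ insert a T | τ u < τ v} = {u ∈ T | τ u < τ v} := by
      intro v hv
      rw [Finset.filter_insert, if_neg (hmax v hv).not_gt]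
    have ha : #{u ∈ insert a T | τ u < τ a} ≤ #T := by
      rw [Finset.filter_insert, if_neg (lt_irrefl _)]
      exact Finset.card_filter_le _ _
    rw [Finset.card_insert_of_notMem haT, Finset.sum_range_succ, Finset.sum_insert haT,
      Finset.sum_congr rfl fun v hv => congrArg (m - #·) (hfilter v hv)]
    omega

theorem card_filter_pos_add_choose_le_sum [Fintype α] [DecidableEq α] (T : Finset α)
    (d τ : α → ℕ) (r : ℕ) (hT : r - 1 ≤ #T)
    (hd : ∀ v ∈ T, r ≤ d v + #{u ∈ T | τ u < τ v}) :
    #{v | 0 < d v} + r.choose 2 ≤ ∑ v, d v := by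
  have hpoint : ∀ v, (if 0 < d v then 1 else 0) +
      (if v ∈ T then r - 1 - #{u ∈ T | τ u < τ v} else 0) ≤ d v := by
    intro v
    by_cases hv : v ∈ T
    · have := hd v hv
      split_ifs <;> omega
    · split_ifs <;> omega
  have hchoose : r.choose 2 ≤ ∑ v ∈ T, (r - 1 - #{u ∈ T | τ u < τ v}) := calc
    r.choose 2 = ∑ k ∈ Finset.range (r - 1), (r - 1 - k) := by
      rw [sum_range_sub_eq_choose]; rcases r with _ | r <;> rfl
    _ ≤ ∑ k ∈ Finset.range #T, (r - 1 - k) :=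
      Finset.sum_le_sum_of_subset (Finset.range_subset_range.mpr hT)
    _ ≤ _ := sum_range_sub_le_sum_sub_card_filter_lt τ (r - 1) T
  calc #{v | 0 < d v} + r.choose 2
      ≤ ∑ v, (if 0 < d v then 1 else 0) +
          ∑ v, (if v ∈ T then r - 1 - #{u ∈ T | τ u < τ v} else 0) := by
        rw [Finset.sum_boole, Finset.sum_ite_mem, Finset.univ_inter]
        simpa using hchoose
    _ ≤ ∑ v, d v := by
        rw [← Finset.sum_add_distrib]
        exact Finset.sum_le_sum fun v _ => hpoint v

theorem two_mul_choose_two_add_one (t : ℕ) (ht : 1 ≤ t) :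
    2 * t.choose 2 + 1 = (t + 1).choose 2 + (t - 1).choose 2 := by
  obtain ⟨s, rfl⟩ := Nat.exists_eq_add_of_le' ht
  have h₁ : (s + 1 + 1).choose 2 = (s + 1) + (s + 1).choose 2 := by
    rw [Nat.choose_succ_succ', Nat.choose_one_right]
  have h₂ : (s + 1).choose 2 = s + s.choose 2 := by
    rw [Nat.choose_succ_succ', Nat.choose_one_right]
  rw [Nat.add_sub_cancel, h₁, h₂]
  omega

end Counting

section Enumeration

variable {α : Type*}

theorem exists_injective_initialSegment (A : Finset α) (κ : α → ℕ) (hκ : Set.InjOn κ A)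
    {m : ℕ} (hm : m ≤ #A) :
    ∃ w : Fin m → α, Function.Injective w ∧ (∀ k, w k ∈ A) ∧
      ∀ k, ∀ a ∈ A, κ a < κ (w k) → ∃ l < k, w l = a := by
  classical
  set e := (A.image κ).orderEmbOfFin (Finset.card_image_of_injOn hκ)
  have he : ∀ k, ∃ a ∈ A, κ a = e k := fun k =>
    Finset.mem_image.mp ((A.image κ).orderEmbOfFin_mem _ k)
  choose f hfA hfκ using he
  refine ⟨fun k => f (Fin.castLE hm k), fun k l hkl => ?_, fun k => hfA _, ?_⟩
  · have := congrArg κ hkl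
    simp only [hfκ] at this
    exact Fin.castLE_injective hm (e.injective this)
  · intro k a ha hlt
    obtain ⟨l, hl⟩ : κ a ∈ Set.range e := by
      rw [Finset.range_orderEmbOfFin]; exact Finset.mem_image_of_mem κ ha
    rw [hfκ, ← hl, e.lt_iff_lt] at hlt
    have hlm : (l : ℕ) < m := (Fin.lt_def.mp hlt).trans k.isLt
    refine ⟨⟨l, hlm⟩, hlt, hκ (hfA _) ha ?_⟩
    rw [hfκ, ← hl]
    rfl

theorem exists_injective_append_initialSegment [DecidableEq α] (S A : Finset α)
    (hSA : Disjoint S A) (κ : α → ℕ) (hκ : Set.InjOn κ A) {m : ℕ} (hm : m ≤ #A) :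
    ∃ v : Fin (#S + m) → α, Function.Injective v ∧ ∀ i : Fin (#S + m), #S ≤ (i : ℕ) →
      v i ∈ A ∧ ∀ u, u ∈ S ∨ u ∈ A ∧ κ u < κ (v i) → ∃ j < i, v j = u := by
  obtain ⟨w, hw, hwA, hwκ⟩ := exists_injective_initialSegment A κ hκ hm
  set eS : Fin #S → α := fun i => S.equivFin.symm i
  refine ⟨Fin.append eS w, Fin.append_injective_iff.mpr ⟨?_, hw, ?_⟩, ?_⟩
  · intro i j hij
    exact S.equivFin.symm.injective (Subtype.ext hij)
  · intro i k hik
    exact Finset.disjoint_left.mp hSA (S.equivFin.symm i).2 (hik ▸ hwA k : eS i ∈ A)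
  · intro i hi
    induction i using Fin.addCases with
    | left i => exact absurd hi (by simp)
    | right k =>
      refine ⟨by simpa using hwA k, ?_⟩
      rintro u (hu | ⟨hu, hlt⟩)
      · refine ⟨Fin.castAdd m (S.equivFin ⟨u, hu⟩), by simp [Fin.lt_def]; omega, by simp [eS]⟩
      · rw [Fin.append_right] at hlt
        obtain ⟨l, hlk, rfl⟩ := hwκ k u hu hlt
        exact ⟨Fin.natAdd _ l, (Fin.natAdd_lt_natAdd_iff _).mpr hlk, Fin.append_right _ _ _⟩

end Enumeration

section Graphs

variable {V : Type*}

theorem ncard_neighborSet_pos_iff [Finite V] (G : SimpleGraph V) (v : V) :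
    0 < (G.neighborSet v).ncard ↔ v ∈ G.support :=
  (Set.ncard_pos (Set.toFinite _)).trans Iff.rfl

theorem sum_ncard_neighborSet [Fintype V] (G : SimpleGraph V) :
    ∑ v, (G.neighborSet v).ncard = 2 * G.edgeSet.ncard := by
  classical
  simpa [Set.ncard_eq_toFinset_card', ← card_neighborSet_eq_degree, edgeFinset]
    using G.sum_degrees_eq_twice_card_edges

theorem ContainsCopyWithEdge.exists_mem_le_ncard_neighborSet [Finite V] {G' : SimpleGraph V}
    {t : ℕ} {e : Sym2 V} (h : ContainsCopyWithEdge G' (star t) e) :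
    ∃ c ∈ e, t ≤ (G'.neighborSet c).ncard := by
  obtain ⟨f, hf, hadj, a, b, hab, rfl⟩ := h
  have hleaves : t ≤ (G'.neighborSet (f (.inl 0))).ncard :=
    calc t = (Set.range (f ∘ Sum.inr)).ncard := by
          rw [Set.ncard_range_of_injective (hf.comp Sum.inr_injective), Nat.card_fin]
      _ ≤ _ := Set.ncard_le_ncard (Set.range_subset_iff.mpr fun y => hadj _ _ (by simp [star]))
  rcases a with a | a <;> rcases b with b | b <;> simp [star] at hab
  · exact ⟨_, Sym2.mem_mk_left _ _, Subsingleton.elim a 0 ▸ hleaves⟩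
  · exact ⟨_, Sym2.mem_mk_right _ _, Subsingleton.elim b 0 ▸ hleaves⟩

theorem isSaturatingStructure_of_backNeighborhoods {G : SimpleGraph V} {t x y : ℕ}
    (hty : t ≤ y) (hyx : y < x) (v : Fin x → V) (hv : Function.Injective v)
    (N : Fin x → Set V)
    (hN : ∀ i : Fin x, y ≤ (i : ℕ) →
      (N i).ncard = t - 1 ∧ ∀ u ∈ N i, G.Adj (v i) u ∧ ∃ j < i, v j = u) :
    IsSaturatingStructure G t x y
      (fromEdgeSet {e | ∃ i : Fin x, y ≤ (i : ℕ) ∧ ∃ u ∈ N i, e = s(v i, u)}) v := by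
  refine ⟨hty, hyx, ?_, hv, ?_, fun i hi => ?_⟩
  · rintro a b ⟨⟨i, hi, u, hu, he⟩, -⟩
    have hadj := ((hN i hi).2 u hu).1
    rcases Sym2.eq_iff.mp he with ⟨rfl, rfl⟩ | ⟨rfl, rfl⟩
    exacts [hadj, hadj.symm]
  · rintro a b ⟨⟨i, hi, u, hu, he⟩, -⟩
    obtain ⟨j, -, rfl⟩ := ((hN i hi).2 u hu).2
    rcases Sym2.eq_iff.mp he with ⟨rfl, rfl⟩ | ⟨rfl, rfl⟩
    exacts [⟨⟨i, rfl⟩, ⟨j, rfl⟩⟩, ⟨⟨j, rfl⟩, ⟨i, rfl⟩⟩]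
  · rw [← (hN i hi).1, ← Set.ncard_image_of_injective _ hv]
    congr 1
    ext u
    constructor
    · rintro ⟨j, ⟨hji, ⟨i', hi', u', hu', he⟩, -⟩, rfl⟩
      rcases Sym2.eq_iff.mp he with ⟨h, rfl⟩ | ⟨h, h'⟩
      · rwa [hv h]
      · -- the edge was recorded at `v j`, whose recorded neighbours precede it, yet `j < i`
        obtain ⟨k, hki', hk⟩ := ((hN i' hi').2 u' hu').2
        rw [← h, hv.eq_iff] at hk
        rw [hv h'] at hji
        exact absurd (hji.trans (hk ▸ hki')) (lt_irrefl _)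
    · intro hu
      obtain ⟨hadj, j, hji, rfl⟩ := (hN i hi).2 u hu
      exact ⟨j, ⟨hji, ⟨i, hi, v j, hu, rfl⟩, hadj.ne⟩, rfl⟩

end Graphs

section Stages

variable {V : Type*} (F₀ : SimpleGraph V) (es : List (Sym2 V))

def stage (i : ℕ) : SimpleGraph V :=
  F₀ ⊔ fromEdgeSet {e | e ∈ es.take i}

noncomputable def stageDegree (i : ℕ) (v : V) : ℕ :=
  ((stage F₀ es i).neighborSet v).ncard

theorem stage_zero : stage F₀ es 0 = F₀ := by
  simp [stage]

theorem stage_mono : Monotone (stage F₀ es) := fun _ _ hij =>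
  sup_le_sup_left (fromEdgeSet_mono fun _ he => List.take_subset_take_left es hij he) F₀

theorem stageDegree_mono [Finite V] (v : V) : Monotone fun i => stageDegree F₀ es i v :=
  fun _ _ hij => Set.ncard_le_ncard fun _ hu => stage_mono F₀ es hij hu

theorem exists_getElem_eq_of_stage_succ_adj {i : ℕ} {a b : V}
    (h : (stage F₀ es (i + 1)).Adj a b) (h' : ¬ (stage F₀ es i).Adj a b) :
    ∃ hi : i < es.length, es[i] = s(a, b) := by
  simp only [stage, sup_adj, fromEdgeSet_adj, Set.mem_ofPred_eq, List.take_add_one,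
    List.mem_append, Option.mem_toList, List.getElem?_eq_some_iff] at h h'
  tauto

theorem stageDegree_succ_le [Finite V] (i : ℕ) (v : V) :
    stageDegree F₀ es (i + 1) v ≤ stageDegree F₀ es i v + 1 := by
  have hnew : ((stage F₀ es (i + 1)).neighborSet v \
      (stage F₀ es i).neighborSet v).ncard ≤ 1 := by
    refine (Set.ncard_le_one (Set.toFinite _)).mpr fun u hu u' hu' => ?_
    obtain ⟨_, he⟩ := exists_getElem_eq_of_stage_succ_adj F₀ es hu.1 hu.2
    obtain ⟨_, he'⟩ := exists_getElem_eq_of_stage_succ_adj F₀ es hu'.1 hu'.2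
    exact Sym2.congr_right.mp (he.symm.trans he')
  have := Set.ncard_le_ncard_sdiff_add_ncard ((stage F₀ es (i + 1)).neighborSet v)
    ((stage F₀ es i).neighborSet v)
  unfold stageDegree
  omega

theorem mem_getElem_of_stageDegree_lt_succ [Finite V] {i : ℕ} {v : V}
    (h : stageDegree F₀ es i v < stageDegree F₀ es (i + 1) v) :
    ∃ hi : i < es.length, v ∈ es[i] := by
  obtain ⟨u, hu, hu'⟩ : ∃ u, (stage F₀ es (i + 1)).Adj v u ∧ ¬ (stage F₀ es i).Adj v u := by
    by_contra! hsub
    exact h.not_ge (Set.ncard_le_ncard fun u hu => hsub u hu)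
  obtain ⟨hi, he⟩ := exists_getElem_eq_of_stage_succ_adj F₀ es hu hu'
  exact ⟨hi, he ▸ Sym2.mem_mk_left v u⟩

variable (r : ℕ)

-- A vertex that never reaches degree `r` gets time `sInf ∅ = 0`.
noncomputable def enrichTime (v : V) : ℕ :=
  sInf {i | r ≤ stageDegree F₀ es i v}

/-- `es` is a run of `K_{1,r+1}`-bootstrap percolation started from `F₀`. -/
def HasRichEndpoints : Prop :=
  ∀ i (hi : i < es.length), ∃ c ∈ es[i], r ≤ stageDegree F₀ es i c

variable {F₀ es r}

theorem le_stageDegree_enrichTime {v : V} {N : ℕ} (h : r ≤ stageDegree F₀ es N v) :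
    r ≤ stageDegree F₀ es (enrichTime F₀ es r v) v :=
  Nat.sInf_mem (s := {i | r ≤ stageDegree F₀ es i v}) ⟨N, h⟩

theorem enrichTime_le {v : V} {N : ℕ} (h : r ≤ stageDegree F₀ es N v) :
    enrichTime F₀ es r v ≤ N :=
  Nat.sInf_le h

theorem stageDegree_lt_of_lt_enrichTime {v : V} {j : ℕ} (h : j < enrichTime F₀ es r v) :
    stageDegree F₀ es j v < r :=
  lt_of_not_ge (Nat.notMem_of_lt_sInf (s := {i | r ≤ stageDegree F₀ es i v}) h)

theorem stageDegree_enrichTime_eq [Finite V] {v : V} {N : ℕ}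
    (h₀ : stageDegree F₀ es 0 v ≤ r) (h : r ≤ stageDegree F₀ es N v) :
    stageDegree F₀ es (enrichTime F₀ es r v) v = r := by
  have hle := le_stageDegree_enrichTime h
  cases hτ : enrichTime F₀ es r v with
  | zero => rw [hτ] at hle; omega
  | succ i =>
    have hlt := stageDegree_lt_of_lt_enrichTime (by omega : i < enrichTime F₀ es r v)
    have := stageDegree_succ_le F₀ es i v
    rw [hτ] at hle
    omega

namespace HasRichEndpoints

variable (h : HasRichEndpoints F₀ es r)
include h

theorem adj_stage_enrichTime {v u : V} (hu : (stage F₀ es (enrichTime F₀ es r v)).Adj v u) :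
    F₀.Adj v u ∨ ∃ j < enrichTime F₀ es r v, r ≤ stageDegree F₀ es j u := by
  refine hu.imp id fun ⟨hmem, _⟩ => ?_
  obtain ⟨j, hj, hje⟩ := List.mem_iff_getElem.mp hmem
  rw [List.getElem_take] at hje
  have hjτ : j < enrichTime F₀ es r v := hj.trans_le (List.length_take_le _ _)
  obtain ⟨c, hc, hrich⟩ := h j (hj.trans_le (List.length_take_le' _ _))
  rw [hje, Sym2.mem_iff] at hc
  rcases hc with rfl | rfl
  · exact absurd (enrichTime_le hrich) hjτ.not_ge
  · exact ⟨j, hjτ, hrich⟩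

theorem eq_of_stageDegree_lt_le_succ [Finite V] {i : ℕ} {u x : V}
    (hu : stageDegree F₀ es i u < r) (hu' : r ≤ stageDegree F₀ es (i + 1) u)
    (hx : stageDegree F₀ es i x < r) (hx' : r ≤ stageDegree F₀ es (i + 1) x) : u = x := by
  obtain ⟨hi, hue⟩ := mem_getElem_of_stageDegree_lt_succ F₀ es (hu.trans_le hu')
  obtain ⟨_, hxe⟩ := mem_getElem_of_stageDegree_lt_succ F₀ es (hx.trans_le hx')
  obtain ⟨c, hc, hrich⟩ := h i hi
  obtain ⟨a, ha⟩ := Sym2.mem_iff_exists.mp hue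
  obtain ⟨b, hb⟩ := Sym2.mem_iff_exists.mp hxe
  have hca : c = a := (Sym2.mem_iff.mp (ha ▸ hc)).resolve_left fun hcu => (hcu ▸ hu).not_ge hrich
  have hcb : c = b := (Sym2.mem_iff.mp (hb ▸ hc)).resolve_left fun hcx => (hcx ▸ hx).not_ge hrich
  subst hca hcb
  exact Sym2.congr_left.mp (ha.symm.trans hb)

theorem enrichTime_injOn [Finite V] :
    Set.InjOn (enrichTime F₀ es r)
      {v | stageDegree F₀ es 0 v < r ∧ r ≤ stageDegree F₀ es es.length v} := by
  have hstep : ∀ v, stageDegree F₀ es 0 v < r → r ≤ stageDegree F₀ es es.length v →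
      ∃ i, enrichTime F₀ es r v = i + 1 ∧
        stageDegree F₀ es i v < r ∧ r ≤ stageDegree F₀ es (i + 1) v := by
    intro v h₀ hv
    obtain ⟨i, hi⟩ := Nat.exists_eq_add_one_of_ne_zero fun h0 =>
      h₀.not_ge (h0 ▸ le_stageDegree_enrichTime hv)
    exact ⟨i, hi, stageDegree_lt_of_lt_enrichTime (by omega), hi ▸ le_stageDegree_enrichTime hv⟩
  rintro u ⟨hu₀, hu⟩ x ⟨hx₀, hx⟩ hτ
  obtain ⟨i, hui, hu, hu'⟩ := hstep u hu₀ hu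
  obtain ⟨j, hxj, hx, hx'⟩ := hstep x hx₀ hx
  obtain rfl : i = j := by omega
  exact h.eq_of_stageDegree_lt_le_succ hu hu' hx hx'

theorem le_ncard_neighborSet_add_ncard_enriched_before [Finite V] {v : V}
    (hv : r ≤ stageDegree F₀ es es.length v) :
    r ≤ (F₀.neighborSet v).ncard + {u | r ≤ stageDegree F₀ es es.length u ∧
      enrichTime F₀ es r u < enrichTime F₀ es r v}.ncard := by
  refine (le_stageDegree_enrichTime hv).trans <| (Set.ncard_le_ncard fun u hu => ?_).trans
    (Set.ncard_union_le _ _)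
  rcases h.adj_stage_enrichTime hu with hF | ⟨j, hj, hu⟩
  · exact Or.inl hF
  · exact Or.inr ⟨hu.trans (stageDegree_mono F₀ es u (hj.le.trans (enrichTime_le hv))),
      (enrichTime_le hu).trans_lt hj⟩

theorem ncard_support_add_choose_le [Fintype V]
    (hT : r - 1 ≤ {v | r ≤ stageDegree F₀ es es.length v}.ncard) :
    F₀.support.ncard + r.choose 2 ≤ 2 * F₀.edgeSet.ncard := by
  classical
  set T := Finset.univ.filter fun v => r ≤ stageDegree F₀ es es.length v
  have hTcard : {v | r ≤ stageDegree F₀ es es.length v}.ncard = #T := by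
    rw [← Set.ncard_coe_finset]; congr; ext; simp [T]
  have hsupp : F₀.support.ncard = #{v | 0 < (F₀.neighborSet v).ncard} := by
    rw [← Set.ncard_coe_finset]; congr; ext; simp [ncard_neighborSet_pos_iff]
  rw [hsupp, ← sum_ncard_neighborSet]
  refine card_filter_pos_add_choose_le_sum T _ (enrichTime F₀ es r) r (hTcard ▸ hT)
    fun v hv => ?_
  have hset : {u | r ≤ stageDegree F₀ es es.length u ∧
      enrichTime F₀ es r u < enrichTime F₀ es r v} =
      ↑(T.filter fun u => enrichTime F₀ es r u < enrichTime F₀ es r v) := by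
    ext; simp [T]
  have := h.le_ncard_neighborSet_add_ncard_enriched_before (Finset.mem_filter.mp hv).2
  rwa [hset, Set.ncard_coe_finset] at this

end HasRichEndpoints

theorem HasRichEndpoints.exists_isSaturatingStructure [Finite V] {t μ y : ℕ}
    (h : HasRichEndpoints F₀ es (t - 1)) (ht : 2 ≤ t) (hsy : F₀.support.ncard ≤ y)
    (hty : t ≤ y) (hyμ : y < μ)
    (hμ : μ ≤ {v | t - 1 ≤ stageDegree F₀ es es.length v}.ncard) :
    ∃ (F : SimpleGraph V) (v : Fin μ → V),
      IsSaturatingStructure (stage F₀ es es.length) t μ y F v := by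
  classical
  have := Fintype.ofFinite V
  set τ := enrichTime F₀ es (t - 1)
  set S := F₀.support.toFinset
  set T := Finset.univ.filter fun v => t - 1 ≤ stageDegree F₀ es es.length v
  have hS : ∀ v ∉ S, stageDegree F₀ es 0 v = 0 := fun v hv => by
    rw [Set.mem_toFinset, ← ncard_neighborSet_pos_iff] at hv
    rw [stageDegree, stage_zero]
    omega
  have hinj : Set.InjOn τ ↑(T \ S) := h.enrichTime_injOn.mono fun v hv => by
    obtain ⟨hvT, hvS⟩ := Finset.mem_sdiff.mp hv
    exact ⟨by rw [hS v hvS]; omega, (Finset.mem_filter.mp hvT).2⟩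
  have hSy : #S ≤ y := by rwa [← Set.ncard_eq_toFinset_card']
  obtain ⟨m, rfl⟩ : ∃ m, μ = #S + m := ⟨μ - #S, by omega⟩
  have hm : m ≤ #(T \ S) := by
    have hT : {v | t - 1 ≤ stageDegree F₀ es es.length v}.ncard = #T := by
      rw [← Set.ncard_coe_finset]; congr; ext; simp [T]
    have := Finset.card_le_card_sdiff_add_card (s := T) (t := S)
    omega
  obtain ⟨v, hv, hvA⟩ :=
    exists_injective_append_initialSegment S (T \ S) Finset.disjoint_sdiff τ hinj hm
  refine ⟨_, v, isSaturatingStructure_of_backNeighborhoods hty hyμ v hv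
    (fun i => (stage F₀ es (τ (v i))).neighborSet (v i)) fun i hi => ?_⟩
  obtain ⟨hvi, hback⟩ := hvA i (by omega)
  obtain ⟨hviT, hviS⟩ := Finset.mem_sdiff.mp hvi
  have hrich := (Finset.mem_filter.mp hviT).2
  refine ⟨stageDegree_enrichTime_eq (by rw [hS _ hviS]; omega) hrich, fun u hu =>
    ⟨stage_mono F₀ es (enrichTime_le hrich) hu, hback u ?_⟩⟩
  rcases h.adj_stage_enrichTime hu with hF | ⟨j, hj, hu⟩
  · exact absurd (Set.mem_toFinset.mpr (show v i ∈ F₀.support from ⟨u, hF⟩)) hviS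
  · by_cases huS : u ∈ S
    · exact Or.inl huS
    · refine Or.inr ⟨Finset.mem_sdiff.mpr ⟨Finset.mem_filter.mpr ⟨Finset.mem_univ u, ?_⟩, huS⟩,
        (enrichTime_le hu).trans_lt hj⟩
      exact hu.trans (stageDegree_mono F₀ es u (hj.le.trans (enrichTime_le hrich)))

end Stages

theorem exists_weaklySaturated_ncard_eq_wsat {V W : Type*} (G : SimpleGraph V)
    (H : SimpleGraph W) : ∃ F, WeaklySaturated G F H ∧ F.edgeSet.ncard = wsat G H :=
  Nat.sInf_mem (s := {m | ∃ F, WeaklySaturated G F H ∧ F.edgeSet.ncard = m})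
    ⟨_, G, ⟨le_rfl, [], List.nodup_nil, by simp, fun i => i.elim0⟩, rfl⟩

theorem WeaklySaturated.exists_stage_eq_and_hasRichEndpoints {V : Type*} [Finite V]
    {G F : SimpleGraph V} {t : ℕ} (h : WeaklySaturated G F (star t)) :
    ∃ es, stage F es es.length = G ∧ HasRichEndpoints F es (t - 1) := by
  obtain ⟨hFG, es, -, hes, hcopy⟩ := h
  refine ⟨es, ?_, fun i hi => ?_⟩
  · ext a b
    simp only [stage, sup_adj, fromEdgeSet_adj, List.take_length, Set.mem_ofPred_eq, hes,
      Set.mem_sdiff, mem_edgeSet]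
    constructor
    · rintro (hF | ⟨⟨hG, -⟩, -⟩)
      exacts [hFG hF, hG]
    · intro hG
      by_cases hF : F.Adj a b
      exacts [Or.inl hF, Or.inr ⟨⟨hG, hF⟩, hG.ne⟩]
  · obtain ⟨c, hc, hdeg⟩ := (hcopy ⟨i, hi⟩).exists_mem_le_ncard_neighborSet
    change t ≤ stageDegree F es (i + 1) c at hdeg
    have := stageDegree_succ_le F es i c
    exact ⟨c, hc, by omega⟩

theorem stmt_14_general (t n μ : ℕ) (ht : 3 ≤ t) (G : SimpleGraph (Fin n))
    (hwsat : wsat G (star t) = Nat.choose t 2)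
    (hμ : Nat.choose (t + 1) 2 < μ)
    (hdeg : μ ≤ {v : Fin n | t - 1 ≤ {u : Fin n | G.Adj v u}.ncard}.ncard) :
    ∃ y : ℕ, y ≤ Nat.choose (t + 1) 2 ∧
      ∃ (F : SimpleGraph (Fin n)) (v : Fin μ → Fin n),
        IsSaturatingStructure G t μ y F v := by
  obtain ⟨F₀, hF₀, hcard⟩ := exists_weaklySaturated_ncard_eq_wsat G (star t)
  obtain ⟨es, rfl, hes⟩ := hF₀.exists_stage_eq_and_hasRichEndpoints
  have htμ : t ≤ (t + 1).choose 2 := by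
    rw [Nat.choose_succ_succ' t 1, Nat.choose_one_right]; omega
  have hsupp := hes.ncard_support_add_choose_le (le_trans (by omega) hdeg)
  have hchoose := two_mul_choose_two_add_one t (by omega)
  exact ⟨max F₀.support.ncard t, max_le (by omega) htμ,
    hes.exists_isSaturatingStructure (by omega) (le_max_left _ _) (le_max_right _ _)
      (max_lt (by omega) (by omega)) hdeg⟩

/-- if `G` is connected, `wsat(G, K_{1,t}) = C(t,2)` and `G` has at least `μ`
vertices of degree at least `t-1` with `μ > C(t+1,2)`, then `G` contains a saturating structure
of length `μ` whose core has size at most `C(t+1,2)`. -/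
theorem stmt_14 (t n μ : ℕ) (ht : 3 ≤ t) (G : SimpleGraph (Fin n)) (hG : G.Connected)
    (hwsat : wsat G (star t) = Nat.choose t 2)
    (hμ : Nat.choose (t + 1) 2 < μ)
    (hdeg : μ ≤ {v : Fin n | t - 1 ≤ {u : Fin n | G.Adj v u}.ncard}.ncard) :
    ∃ y : ℕ, y ≤ Nat.choose (t + 1) 2 ∧
      ∃ (F : SimpleGraph (Fin n)) (v : Fin μ → Fin n),
        IsSaturatingStructure G t μ y F v :=
  stmt_14_general t n μ ht G hwsat hμ hdeg
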